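/- Let f be a convex function on a convex subset of ℝⁿ, and let l_x and l_y be two compact convex sets contained in the domain whose relative interiors intersect (they intersect transversally). If f is affine when restricted to l_x and affine when restricted to l_y, then f is affine when restricted to the convex hull of l_x ∪ l_y. -/

import Mathlib

/-!
If `z` lies in the relative interiors of both `lx` and `ly`, the affine maps `gx` and `gy` agree
near `z` in every direction common to the two sets, so their linear parts agree on
`vectorSpan lx ⊓ vectorSpan ly` and they glue to a single affine `g` with `f = g` on `lx ∪ ly`.
Convexity gives `f ≤ g` on the join of `lx` and `ly`. Conversely, any point `p` of the join can be
pushed through `z` to a point `q` of the join with `z` strictly between `p` and `q`; since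
`f z = g z` and `f q ≤ g q`, convexity of `f` along `[p, q]` forces `g p ≤ f p`.
-/

open Set Topology

theorem LinearMap.exists_eqOn_of_eqOn_inf {K V W : Type*} [DivisionRing K] [AddCommGroup V]
    [Module K V] [AddCommGroup W] [Module K W] {p q : Submodule K V} (A B : V →ₗ[K] W)
    (h : ∀ v ∈ p ⊓ q, A v = B v) :
    ∃ L : V →ₗ[K] W, (∀ v ∈ p, L v = A v) ∧ ∀ v ∈ q, L v = B v := by
  let A' : V →ₗ.[K] W := ⟨p, A.domRestrict p⟩
  let B' : V →ₗ.[K] W := ⟨q, B.domRestrict q⟩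
  have hAB : ∀ (x : A'.domain) (y : B'.domain), (x : V) = y → A' x = B' y := by
    rintro ⟨x, hx⟩ ⟨y, hy⟩ (rfl : x = y)
    exact h x ⟨hx, hy⟩
  obtain ⟨L, hL⟩ := LinearMap.exists_extend (A'.sup B' hAB).toFun
  have hL' : ∀ v (hv : v ∈ (A'.sup B' hAB).domain), L v = A'.sup B' hAB ⟨v, hv⟩ :=
    fun v hv => LinearMap.congr_fun hL ⟨v, hv⟩
  refine ⟨L, fun v hv => ?_, fun v hv => ?_⟩
  · rw [hL' v (A'.left_le_sup B' hAB |>.1 hv)]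
    exact ((A'.left_le_sup B' hAB).2 (x := ⟨v, hv⟩) rfl).symm
  · rw [hL' v (A'.right_le_sup B' hAB |>.1 hv)]
    exact ((A'.right_le_sup B' hAB).2 (x := ⟨v, hv⟩) rfl).symm

theorem AffineMap.exists_eqOn_mk'_of_linear_eqOn_inf {k V P W Q : Type*} [DivisionRing k]
    [AddCommGroup V] [Module k V] [AddTorsor V P] [AddCommGroup W] [Module k W] [AddTorsor W Q]
    (f g : P →ᵃ[k] Q) {z : P} (hz : f z = g z) {p q : Submodule k V}
    (h : ∀ v ∈ p ⊓ q, f.linear v = g.linear v) :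
    ∃ φ : P →ᵃ[k] Q, EqOn φ f (AffineSubspace.mk' z p) ∧ EqOn φ g (AffineSubspace.mk' z q) := by
  obtain ⟨L, hLf, hLg⟩ := LinearMap.exists_eqOn_of_eqOn_inf f.linear g.linear h
  refine ⟨AffineMap.mk' (fun x => L (x -ᵥ z) +ᵥ f z) L z fun _ => by simp, fun x hx => ?_,
    fun x hx => ?_⟩
  · simp [hLf _ (AffineSubspace.mem_mk'.1 hx)]
  · simp [hLg _ (AffineSubspace.mem_mk'.1 hx), hz]

theorem ConvexOn.affineMap_le_of_mem_openSegment {V : Type*} [AddCommGroup V] [Module ℝ V]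
    {K : Set V} {f : V → ℝ} (hf : ConvexOn ℝ K f) (g : V →ᵃ[ℝ] ℝ) {p q z : V} (hp : p ∈ K)
    (hq : q ∈ K) (hz : z ∈ openSegment ℝ p q) (hgz : g z ≤ f z) (hfq : f q ≤ g q) :
    g p ≤ f p := by
  obtain ⟨a, b, ha, hb, hab, rfl⟩ := hz
  have hf_combo : f (a • p + b • q) ≤ a * f p + b * f q := hf.2 hp hq ha.le hb.le hab
  have hg_combo : g (a • p + b • q) = a * g p + b * g q := Convex.combo_affine_apply hab
  have hfq' : b * f q ≤ b * g q := mul_le_mul_of_nonneg_left hfq hb.le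
  exact le_of_mul_le_mul_left (by linarith) ha

section IntrinsicInterior

variable {V : Type*} [AddCommGroup V] [Module ℝ V] [TopologicalSpace V] [IsTopologicalAddGroup V]
  [ContinuousSMul ℝ V] {s t : Set V} {z : V}

theorem eventually_add_smul_mem_of_mem_intrinsicInterior (hz : z ∈ intrinsicInterior ℝ s)
    {v : V} (hv : v ∈ vectorSpan ℝ s) : ∀ᶠ c in 𝓝 (0 : ℝ), z + c • v ∈ s := by
  obtain ⟨z, hz, rfl⟩ := hz
  have hdir : ∀ c : ℝ, c • v ∈ (affineSpan ℝ s).direction := fun c => by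
    rw [direction_affineSpan]; exact Submodule.smul_mem _ _ hv
  let γ : ℝ → affineSpan ℝ s := fun c =>
    ⟨c • v +ᵥ (z : V), AffineSubspace.vadd_mem_of_mem_direction (hdir c) z.2⟩
  have hγ : Continuous γ := by fun_prop
  have h0 : γ 0 = z := by ext; simp [γ]
  filter_upwards [hγ.continuousAt.preimage_mem_nhds (h0 ▸ mem_interior_iff_mem_nhds.1 hz)]
    with c hc
  simpa [γ, add_comm] using hc

theorem exists_pos_add_smul_mem_of_mem_intrinsicInterior (hzs : z ∈ intrinsicInterior ℝ s)
    (hzt : z ∈ intrinsicInterior ℝ t) {v w : V} (hv : v ∈ vectorSpan ℝ s)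
    (hw : w ∈ vectorSpan ℝ t) : ∃ c : ℝ, 0 < c ∧ z + c • v ∈ s ∧ z + c • w ∈ t := by
  have h := (eventually_add_smul_mem_of_mem_intrinsicInterior hzs hv).and
    (eventually_add_smul_mem_of_mem_intrinsicInterior hzt hw)
  obtain ⟨c, ⟨hcs, hct⟩, hc⟩ :=
    ((h.filter_mono nhdsWithin_le_nhds).and (self_mem_nhdsWithin (s := Ioi 0))).exists
  exact ⟨c, hc, hcs, hct⟩

theorem exists_mem_convexJoin_mem_openSegment_of_mem_intrinsicInterior
    (hzs : z ∈ intrinsicInterior ℝ s) (hzt : z ∈ intrinsicInterior ℝ t) {p : V}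
    (hp : p ∈ convexJoin ℝ s t) : ∃ q ∈ convexJoin ℝ s t, z ∈ openSegment ℝ p q := by
  obtain ⟨x, hx, y, hy, a, b, ha, hb, hab, rfl⟩ := mem_convexJoin.1 hp
  obtain ⟨c, hc, hcx, hcy⟩ := exists_pos_add_smul_mem_of_mem_intrinsicInterior hzs hzt
    (vsub_mem_vectorSpan ℝ (intrinsicInterior_subset hzs) hx)
    (vsub_mem_vectorSpan ℝ (intrinsicInterior_subset hzt) hy)
  refine ⟨z + c • (z - (a • x + b • y)),
    mem_convexJoin.2 ⟨_, hcx, _, hcy, a, b, ha, hb, hab, ?_⟩,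
    c / (c + 1), 1 / (c + 1), by positivity, by positivity, by field_simp, ?_⟩
  · simp only [vsub_eq_sub]
    linear_combination (norm := module) hab • ((1 + c) • z)
  · match_scalars <;> field_simp <;> ring

theorem AffineMap.linear_eqOn_inf_vectorSpan {W Q : Type*} [AddCommGroup W] [Module ℝ W]
    [AddTorsor W Q] (hzs : z ∈ intrinsicInterior ℝ s) (hzt : z ∈ intrinsicInterior ℝ t)
    {f g : V →ᵃ[ℝ] Q} (hfg : EqOn f g (s ∩ t)) :
    ∀ v ∈ vectorSpan ℝ s ⊓ vectorSpan ℝ t, f.linear v = g.linear v := by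
  rintro v ⟨hvs, hvt⟩
  obtain ⟨c, hc, hcs, hct⟩ := exists_pos_add_smul_mem_of_mem_intrinsicInterior hzs hzt hvs hvt
  have hz : z ∈ s ∩ t := ⟨intrinsicInterior_subset hzs, intrinsicInterior_subset hzt⟩
  have key : c • f.linear v = c • g.linear v := by
    rw [← map_smul, ← map_smul, ← vadd_vsub (c • v) z, vadd_eq_add, add_comm, f.linearMap_vsub,
      g.linearMap_vsub, hfg ⟨hcs, hct⟩, hfg hz]
  exact smul_right_injective W hc.ne' key

theorem AffineMap.exists_eqOn_of_mem_intrinsicInterior {W Q : Type*} [AddCommGroup W]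
    [Module ℝ W] [AddTorsor W Q] (hzs : z ∈ intrinsicInterior ℝ s)
    (hzt : z ∈ intrinsicInterior ℝ t) {f g : V →ᵃ[ℝ] Q} (hfg : EqOn f g (s ∩ t)) :
    ∃ φ : V →ᵃ[ℝ] Q, EqOn φ f s ∧ EqOn φ g t := by
  have hzs' := intrinsicInterior_subset hzs
  have hzt' := intrinsicInterior_subset hzt
  obtain ⟨φ, hφf, hφg⟩ := AffineMap.exists_eqOn_mk'_of_linear_eqOn_inf f g (hfg ⟨hzs', hzt'⟩)
    (AffineMap.linear_eqOn_inf_vectorSpan hzs hzt hfg)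
  refine ⟨φ, hφf.mono fun x hx => ?_, hφg.mono fun x hx => ?_⟩
  · rw [← direction_affineSpan, AffineSubspace.mk'_eq (mem_affineSpan ℝ hzs')]
    exact subset_affineSpan ℝ s hx
  · rw [← direction_affineSpan, AffineSubspace.mk'_eq (mem_affineSpan ℝ hzt')]
    exact subset_affineSpan ℝ t hx

theorem ConvexOn.eqOn_convexJoin_of_eqOn_union {K : Set V} {f : V → ℝ} (hf : ConvexOn ℝ K f)
    (hsK : s ⊆ K) (htK : t ⊆ K) (hst : (intrinsicInterior ℝ s ∩ intrinsicInterior ℝ t).Nonempty)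
    {g : V →ᵃ[ℝ] ℝ} (hfg : EqOn f g (s ∪ t)) : EqOn f g (convexJoin ℝ s t) := by
  obtain ⟨z, hzs, hzt⟩ := hst
  have hjoinK : convexJoin ℝ s t ⊆ K := convexJoin_subset hsK htK hf.1
  have hle : ∀ p ∈ convexJoin ℝ s t, f p ≤ g p := by
    intro p hp
    obtain ⟨x, hx, y, hy, a, b, ha, hb, hab, rfl⟩ := mem_convexJoin.1 hp
    calc f (a • x + b • y) ≤ a * f x + b * f y := hf.2 (hsK hx) (htK hy) ha hb hab
      _ = g (a • x + b • y) := by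
        rw [hfg (Or.inl hx), hfg (Or.inr hy), Convex.combo_affine_apply hab, smul_eq_mul,
          smul_eq_mul]
  intro p hp
  obtain ⟨q, hq, hzpq⟩ := exists_mem_convexJoin_mem_openSegment_of_mem_intrinsicInterior hzs hzt hp
  exact (hle p hp).antisymm <| hf.affineMap_le_of_mem_openSegment g (hjoinK hp) (hjoinK hq) hzpq
    (hfg (Or.inl (intrinsicInterior_subset hzs))).ge (hle q hq)

end IntrinsicInterior

theorem stmt_4 (n : ℕ) (K lx ly : Set (EuclideanSpace ℝ (Fin n)))
    (f : EuclideanSpace ℝ (Fin n) → ℝ)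
    (hf : ConvexOn ℝ K f)
    (hlxK : lx ⊆ K) (hlyK : ly ⊆ K)
    (hlxconv : Convex ℝ lx) (hlyconv : Convex ℝ ly)
    (htrans : (intrinsicInterior ℝ lx ∩ intrinsicInterior ℝ ly).Nonempty)
    (gx : EuclideanSpace ℝ (Fin n) →ᵃ[ℝ] ℝ) (hgx : EqOn f gx lx)
    (gy : EuclideanSpace ℝ (Fin n) →ᵃ[ℝ] ℝ) (hgy : EqOn f gy ly) :
    ∃ g : EuclideanSpace ℝ (Fin n) →ᵃ[ℝ] ℝ, EqOn f g (convexHull ℝ (lx ∪ ly)) := by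
  obtain ⟨z, hzx, hzy⟩ := htrans
  obtain ⟨g, hgx', hgy'⟩ := AffineMap.exists_eqOn_of_mem_intrinsicInterior hzx hzy
    (f := gx) (g := gy) fun p hp => (hgx hp.1).symm.trans (hgy hp.2)
  refine ⟨g, ?_⟩
  rw [hlxconv.convexHull_union hlyconv ⟨z, intrinsicInterior_subset hzx⟩
    ⟨z, intrinsicInterior_subset hzy⟩]
  exact hf.eqOn_convexJoin_of_eqOn_union hlxK hlyK ⟨z, hzx, hzy⟩
    ((hgx.trans hgx'.symm).union (hgy.trans hgy'.symm))
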